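/- For every nonnegative integer r, every positive integer p, and every real x with |x| < 1, ∑_{n=1}^∞ C(n+r, r) (1^p + 2^p + ⋯ + n^p) x^n = (1/r!) · d^r/dx^r [ x^r/(1-x)² · ω_p(x/(1-x)) ]. -/

import Mathlib

/-!
Write `T n = ∑_{m ≤ n} m ^ p`. Expanding `m ^ p = ∑_k S(p,k) m(m-1)⋯(m-k+1)` and summing with the
hockey-stick identity gives `T n = ∑_k S(p,k) k! C(n+1, k+1)`, and since
`∑_n C(n+1, k+1) y ^ n = y ^ k / (1-y) ^ (k+2)`, the bracket on the right-hand side is the power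
series `∑_n T n y ^ (n+r)` on `|y| < 1`. Differentiating it termwise `r` times turns `y ^ (n+r)`
into `r! C(n+r, r) y ^ n`, and the `n = 0` term vanishes because `T 0 = 0 ^ p = 0`.
-/

open Finset Real

/-- Stirling numbers of the second kind. -/
def stirling2 : ℕ → ℕ → ℕ
  | 0, 0 => 1
  | 0, _ + 1 => 0
  | _ + 1, 0 => 0
  | p + 1, k + 1 => (k + 1) * stirling2 p (k + 1) + stirling2 p k

/-- The geometric (Fubini) polynomial. -/
noncomputable def geomPoly (p : ℕ) (x : ℝ) : ℝ :=
  ∑ k ∈ Finset.range (p + 1), (stirling2 p k : ℝ) * k.factorial * x ^ k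

open Asymptotics Filter Topology

theorem stirling2_eq_stirlingSecond : stirling2 = Nat.stirlingSecond := by
  ext p k
  induction p generalizing k with
  | zero => cases k <;> rfl
  | succ p ih => cases k <;> simp [stirling2, Nat.stirlingSecond_succ_succ, ih]

namespace Nat

theorem mul_descFactorial (n k : ℕ) :
    n * n.descFactorial k = n.descFactorial (k + 1) + k * n.descFactorial k := by
  rcases le_or_gt k n with h | h
  · rw [descFactorial_succ, ← add_mul, Nat.sub_add_cancel h]
  · simp [descFactorial_eq_zero_iff_lt.mpr h]

theorem pow_eq_sum_stirlingSecond_mul_descFactorial (n p : ℕ) :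
    n ^ p = ∑ k ∈ range (p + 1), stirlingSecond p k * n.descFactorial k := by
  induction p with
  | zero => simp
  | succ p ih =>
    let f : ℕ → ℕ := fun k => k * stirlingSecond p k * n.descFactorial k
    have shift : ∑ k ∈ range (p + 1), f (k + 1) = ∑ k ∈ range (p + 1), f k := by
      have h₁ := sum_range_succ' f (p + 1)
      have h₂ := sum_range_succ f (p + 1)
      have hf₀ : f 0 = 0 := by simp [f]
      have hf₁ : f (p + 1) = 0 := by simp [f, stirlingSecond_eq_zero_of_lt (lt_succ_self p)]
      omega
    calc n ^ (p + 1) = ∑ k ∈ range (p + 1), stirlingSecond p k * (n * n.descFactorial k) := by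
          rw [pow_succ, ih, sum_mul]
          simp only [mul_comm n, mul_assoc]
      _ = ∑ k ∈ range (p + 1), (stirlingSecond p k * n.descFactorial (k + 1) + f k) := by
          simp only [mul_descFactorial, f]
          ring_nf
      _ = _ := by
          rw [sum_add_distrib, ← shift, ← sum_add_distrib, sum_range_succ' _ (p + 1)]
          simp only [stirlingSecond_succ_succ, stirlingSecond_succ_zero, f, zero_mul, add_zero]
          exact sum_congr rfl fun k _ => by ring

theorem sum_range_choose_eq_choose_succ (n j : ℕ) :
    ∑ m ∈ range (n + 1), m.choose j = (n + 1).choose (j + 1) := by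
  induction n with
  | zero => cases j <;> simp [choose_eq_zero_of_lt]
  | succ n ih => rw [sum_range_succ, ih, choose_succ_succ' (n + 1), add_comm]

theorem sum_range_pow_eq_sum_stirlingSecond (n p : ℕ) :
    ∑ m ∈ range (n + 1), m ^ p
      = ∑ k ∈ range (p + 1), stirlingSecond p k * k.factorial * (n + 1).choose (k + 1) := by
  simp_rw [pow_eq_sum_stirlingSecond_mul_descFactorial _ p, descFactorial_eq_factorial_mul_choose]
  rw [sum_comm]
  refine sum_congr rfl fun k _ => ?_
  rw [← sum_range_choose_eq_choose_succ, mul_sum]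
  ring_nf

end Nat

theorem sum_range_pow_eq_sum_Icc {R : Type*} [Semiring R] {p : ℕ} (hp : p ≠ 0) (n : ℕ) :
    ∑ m ∈ range (n + 1), (m : R) ^ p = ∑ k ∈ Icc 1 n, (k : R) ^ p := by
  rw [range_eq_Ico, sum_eq_sum_Ico_succ_bot n.succ_pos]
  simp [hp, Ico_add_one_right_eq_Icc]

section PowerSeries

variable {a : ℕ → ℝ} {d : ℕ}

theorem summable_mul_pow_of_isBigO (ha : a =O[atTop] fun n => (n : ℝ) ^ d) {s : ℝ}
    (hs : |s| < 1) : Summable fun n => a n * s ^ n := by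
  have hg : Summable fun n : ℕ => (n : ℝ) ^ d * s ^ n :=
    summable_pow_mul_geometric_of_norm_lt_one d (by rwa [Real.norm_eq_abs])
  exact summable_of_isBigO_nat hg (ha.mul (isBigO_refl (fun n : ℕ => s ^ n) atTop))

theorem isBigO_natCast_add_mul (ha : a =O[atTop] fun n => (n : ℝ) ^ d) (c : ℕ) :
    (fun n => ((n + c : ℕ) : ℝ) * a n) =O[atTop] fun n => (n : ℝ) ^ (d + 1) := by
  have hc : (fun n : ℕ => ((n + c : ℕ) : ℝ)) =O[atTop] fun n => (n : ℝ) := by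
    refine IsBigO.of_bound (c + 1) ?_
    filter_upwards [eventually_ge_atTop 1] with n hn
    have : (1 : ℝ) ≤ n := by exact_mod_cast hn
    simp only [norm_natCast]
    push_cast
    nlinarith
  simpa [pow_succ, mul_comm] using hc.mul ha

theorem hasDerivAt_tsum_mul_pow_add_one (ha : a =O[atTop] fun n => (n : ℝ) ^ d) (m : ℕ)
    {x : ℝ} (hx : |x| < 1) :
    HasDerivAt (fun y => ∑' n, a n * y ^ (n + m + 1))
      (∑' n, ((n + m + 1 : ℕ) : ℝ) * a n * x ^ (n + m)) x := by
  obtain ⟨s, hxs, hs⟩ := exists_between hx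
  have hs₀ : 0 < s := (abs_nonneg x).trans_lt hxs
  have hx' : x ∈ Set.Ioo (-s) s := abs_lt.mp hxs
  have hc : (fun n => ((n + m + 1 : ℕ) : ℝ) * a n) =O[atTop] fun n => (n : ℝ) ^ (d + 1) :=
    isBigO_natCast_add_mul ha (m + 1)
  have hu : Summable fun n => |((n + m + 1 : ℕ) : ℝ) * a n| * s ^ n * s ^ m :=
    (summable_mul_pow_of_isBigO hc.abs_left (by rwa [abs_of_pos hs₀])).mul_right _
  have hbound : ∀ n, ∀ y ∈ Set.Ioo (-s) s,
      ‖a n * (((n + m + 1 : ℕ) : ℝ) * y ^ (n + m + 1 - 1))‖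
        ≤ |((n + m + 1 : ℕ) : ℝ) * a n| * s ^ n * s ^ m := by
    intro n y hy
    have hys : |y| ^ (n + m) ≤ s ^ (n + m) :=
      pow_le_pow_left₀ (abs_nonneg y) (abs_le.mpr ⟨hy.1.le, hy.2.le⟩) _
    calc ‖a n * (((n + m + 1 : ℕ) : ℝ) * y ^ (n + m + 1 - 1))‖
        = |((n + m + 1 : ℕ) : ℝ) * a n| * |y| ^ (n + m) := by
          rw [Nat.add_sub_cancel, Real.norm_eq_abs, abs_mul, abs_mul, abs_mul, abs_pow]
          ring
      _ ≤ |((n + m + 1 : ℕ) : ℝ) * a n| * s ^ (n + m) := by gcongr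
      _ = |((n + m + 1 : ℕ) : ℝ) * a n| * s ^ n * s ^ m := by ring
  have hsum : Summable fun n => a n * x ^ (n + m + 1) := by
    simpa only [add_assoc _ m, pow_add, mul_assoc] using
      (summable_mul_pow_of_isBigO ha hx).mul_right (x ^ (m + 1))
  refine (hasDerivAt_tsum_of_isPreconnected hu isOpen_Ioo isPreconnected_Ioo
    (fun n y _ => (hasDerivAt_pow (n + m + 1) y).const_mul (a n)) hbound hx' hsum hx').congr_deriv
      (tsum_congr fun n => ?_)
  rw [Nat.add_sub_cancel]
  ring

theorem iteratedDeriv_tsum_mul_pow_add (ha : a =O[atTop] fun n => (n : ℝ) ^ d) (k : ℕ) {x : ℝ}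
    (hx : |x| < 1) :
    iteratedDeriv k (fun y => ∑' n, a n * y ^ (n + k)) x
      = ∑' n, ((n + k).descFactorial k : ℝ) * a n * x ^ n := by
  induction k generalizing a d with
  | zero => simp
  | succ k ih =>
    have hderiv : deriv (fun y => ∑' n, a n * y ^ (n + (k + 1)))
        =ᶠ[𝓝 x] fun y => ∑' n, ((n + (k + 1) : ℕ) : ℝ) * a n * y ^ (n + k) := by
      filter_upwards [isOpen_Ioo.mem_nhds (abs_lt.mp hx)] with y hy
      exact (hasDerivAt_tsum_mul_pow_add_one ha k (abs_lt.mpr hy)).deriv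
    rw [iteratedDeriv_succ', (hderiv.iteratedDeriv k).eq_of_nhds,
      ih (isBigO_natCast_add_mul ha (k + 1))]
    refine tsum_congr fun n => ?_
    rw [← add_assoc, Nat.succ_descFactorial_succ]
    push_cast
    ring

end PowerSeries

theorem isBigO_sum_range_pow (p : ℕ) :
    (fun n => ∑ m ∈ range (n + 1), (m : ℝ) ^ p) =O[atTop] fun n => (n : ℝ) ^ (p + 1) := by
  refine (IsBigO.of_bound 1 (Eventually.of_forall fun n => ?_)).trans
    (isBigO_natCast_add_mul (isBigO_refl _ _) 1)
  rw [one_mul, Real.norm_of_nonneg (by positivity), Real.norm_of_nonneg (by positivity)]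
  calc ∑ m ∈ range (n + 1), (m : ℝ) ^ p ≤ ∑ _m ∈ range (n + 1), (n : ℝ) ^ p :=
        sum_le_sum fun m hm => pow_le_pow_left₀ m.cast_nonneg (mod_cast mem_range_succ_iff.mp hm) p
    _ = ((n + 1 : ℕ) : ℝ) * (n : ℝ) ^ p := by simp

theorem hasSum_choose_succ_mul_pow (j : ℕ) {y : ℝ} (hy : |y| < 1) :
    HasSum (fun n => ((n + 1).choose (j + 1) : ℝ) * y ^ n) (y ^ j / (1 - y) ^ (j + 2)) := by
  have h := (hasSum_choose_mul_geometric_of_norm_lt_one (j + 1)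
    (by rwa [Real.norm_eq_abs])).mul_left (y ^ j)
  have hf : (fun n => y ^ j * (((n + (j + 1)).choose (j + 1) : ℕ) * y ^ n))
      = fun n => (((n + j + 1).choose (j + 1) : ℕ) : ℝ) * y ^ (n + j) := by
    funext n
    rw [← add_assoc, pow_add]
    ring
  have hv : y ^ j * (1 / (1 - y) ^ (j + 1 + 1)) = y ^ j / (1 - y) ^ (j + 2) := by ring
  have hzero : ∑ i ∈ range j, ((i + 1).choose (j + 1) : ℝ) * y ^ i = 0 :=
    sum_eq_zero fun i hi => by
      rw [Nat.choose_eq_zero_of_lt (by simpa using hi), Nat.cast_zero, zero_mul]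
  rw [hf, hv] at h
  rw [← hasSum_nat_add_iff' j, hzero, sub_zero]
  simpa only [add_right_comm _ j] using h

theorem hasSum_sum_range_pow_mul_pow (p : ℕ) {y : ℝ} (hy : |y| < 1) :
    HasSum (fun n => (∑ m ∈ range (n + 1), (m : ℝ) ^ p) * y ^ n)
      (geomPoly p (y / (1 - y)) / (1 - y) ^ 2) := by
  have hy₁ : 1 - y ≠ 0 := by linarith [(abs_lt.mp hy).2]
  have h := hasSum_sum (s := range (p + 1)) fun k _ =>
    (hasSum_choose_succ_mul_pow k hy).mul_left ((stirling2 p k : ℝ) * k.factorial)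
  have hf : (fun n => ∑ k ∈ range (p + 1),
        (stirling2 p k : ℝ) * k.factorial * (((n + 1).choose (k + 1) : ℝ) * y ^ n))
      = fun n => (∑ m ∈ range (n + 1), (m : ℝ) ^ p) * y ^ n := by
    funext n
    simp only [← mul_assoc, ← sum_mul, stirling2_eq_stirlingSecond]
    congr 1
    exact_mod_cast (Nat.sum_range_pow_eq_sum_stirlingSecond n p).symm
  have hv : ∑ k ∈ range (p + 1), (stirling2 p k : ℝ) * k.factorial * (y ^ k / (1 - y) ^ (k + 2))
      = geomPoly p (y / (1 - y)) / (1 - y) ^ 2 := by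
    rw [geomPoly, sum_div]
    refine sum_congr rfl fun k _ => ?_
    rw [div_pow, pow_add]
    field_simp
  rwa [hf, hv] at h

theorem stmt_17 (r : ℕ) (p : ℕ) (hp : 0 < p) (x : ℝ) (hx : |x| < 1) :
    ∑' n : ℕ, ((n + 1 + r).choose r : ℝ) * (∑ k ∈ Finset.Icc 1 (n + 1), (k : ℝ) ^ p) * x ^ (n + 1)
      = (1 / r.factorial) *
          iteratedDeriv r (fun y => y ^ r / (1 - y) ^ 2 * geomPoly p (y / (1 - y))) x := by
  set T : ℕ → ℝ := fun n => ∑ m ∈ range (n + 1), (m : ℝ) ^ p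
  have hF : (fun y => y ^ r / (1 - y) ^ 2 * geomPoly p (y / (1 - y)))
      =ᶠ[𝓝 x] fun y => ∑' n, T n * y ^ (n + r) := by
    filter_upwards [isOpen_Ioo.mem_nhds (abs_lt.mp hx)] with y hy
    calc y ^ r / (1 - y) ^ 2 * geomPoly p (y / (1 - y))
        = y ^ r * (geomPoly p (y / (1 - y)) / (1 - y) ^ 2) := by ring
      _ = ∑' n, y ^ r * (T n * y ^ n) :=
        (((hasSum_sum_range_pow_mul_pow p (abs_lt.mpr hy)).mul_left (y ^ r)).tsum_eq).symm
      _ = ∑' n, T n * y ^ (n + r) := tsum_congr fun n => by ring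
  rw [(hF.iteratedDeriv r).eq_of_nhds,
    iteratedDeriv_tsum_mul_pow_add (isBigO_sum_range_pow p) r hx, ← tsum_mul_left, eq_comm,
    ← (add_left_injective 1).tsum_eq]
  · refine tsum_congr fun n => ?_
    rw [Nat.descFactorial_eq_factorial_mul_choose, ← sum_range_pow_eq_sum_Icc hp.ne']
    push_cast
    field_simp
  · rintro (_ | n) hn
    · simp [hp.ne'] at hn
    · exact ⟨n, rfl⟩
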